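/- arXiv:1510.09044 — 2 statements merged into one kernel-verified Lean document; each statement's English description precedes it below -/
import Mathlib

section
/- Let 𝒞 be a strongly connected small category, k a commutative ring, and 𝓕 : 𝒞 → Mod(k) a functor. Then the limit lim 𝓕 exists, and for every object c ∈ 𝒞 the canonical projection φ_c : lim 𝓕 → 𝓕(c) is a monomorphism which induces an isomorphism lim 𝓕 ≅ inv 𝓕(c), where inv 𝓕(c) = { x ∈ 𝓕(c) ∣ for all objects c′ and all pairs of morphisms f₁, f₂ : c → c′, 𝓕(f₁)(x) = 𝓕(f₂)(x) }. -/
/-!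
Since every object receives a morphism from `c`, each leg of a limit cone factors through the leg
at `c`, so the legs being jointly monic forces `π_c` to be monic. Every leg of a cone lands in
the invariants. Conversely, choosing one morphism `σ c' : c ⟶ c'` for every `c'`, the maps
`F.map (σ c')` restricted to `inv F c` form a cone (the choice is irrelevant precisely on
invariant elements), whose leg at `c` is the inclusion; its lift into the limit shows that every
invariant element lies in the range of `π_c`.
-/

open CategoryTheory CategoryTheory.Limits

namespace Stmt4

variable {k : Type} [CommRing k] {C : Type} [SmallCategory C]

/-- The submodule of "invariant elements" of `𝓕(c)`:
`inv 𝓕(c) = {x ∈ 𝓕(c) ∣ ∀ c', ∀ f₁ f₂ : c ⟶ c', 𝓕(f₁)(x) = 𝓕(f₂)(x)}`. -/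
def inv (F : C ⥤ ModuleCat.{0} k) (c : C) : Submodule k (F.obj c) where
  carrier := {x | ∀ (c' : C) (f₁ f₂ : c ⟶ c'), F.map f₁ x = F.map f₂ x}
  add_mem' {a b} ha hb c' f₁ f₂ := by simp [map_add, ha c' f₁ f₂, hb c' f₁ f₂]
  zero_mem' c' f₁ f₂ := by simp
  smul_mem' r a ha c' f₁ f₂ := by simp [map_smul, ha c' f₁ f₂]

end Stmt4

namespace CategoryTheory.Limits

variable {C D : Type*} [Category C] [Category D] {F : C ⥤ D}

theorem IsLimit.mono_π_app_of_nonempty_hom {t : Cone F} (ht : IsLimit t) {c : C}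
    (h : ∀ c', Nonempty (c ⟶ c')) : Mono (t.π.app c) :=
  ⟨fun g₁ g₂ e => ht.hom_ext fun j => by
    obtain ⟨f⟩ := h j
    rw [← t.w f, ← Category.assoc, ← Category.assoc, e]⟩

end CategoryTheory.Limits

namespace Stmt4

variable {k : Type} [CommRing k] {C : Type} [SmallCategory C] {F : C ⥤ ModuleCat.{0} k}

theorem range_π_app_le_inv (s : Cone F) (c : C) : LinearMap.range (s.π.app c).hom ≤ inv F c := by
  rintro _ ⟨z, rfl⟩ c' f₁ f₂
  have h₁ := ConcreteCategory.congr_hom (s.w f₁) z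
  have h₂ := ConcreteCategory.congr_hom (s.w f₂) z
  exact h₁.trans h₂.symm

variable (F) in
def invCone (c : C) (σ : ∀ c', c ⟶ c') : Cone F where
  pt := ModuleCat.of k (inv F c)
  π.app c' := ModuleCat.ofHom ((F.map (σ c')).hom ∘ₗ (inv F c).subtype)
  π.naturality c' c'' g := by
    ext x
    have := x.2 c'' (σ c' ≫ g) (σ c'')
    simpa [F.map_comp] using this.symm

theorem invCone_π_app_self (c : C) (σ : ∀ c', c ⟶ c') (x : inv F c) :
    (invCone F c σ).π.app c x = x :=
  (x.2 c (σ c) (𝟙 c)).trans (by rw [F.map_id]; rfl)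

theorem inv_le_range_π_app {t : Cone F} (ht : IsLimit t) {c : C}
    (h : ∀ c', Nonempty (c ⟶ c')) : inv F c ≤ LinearMap.range (t.π.app c).hom := by
  intro x hx
  let σ := fun c' => (h c').some
  exact ⟨ht.lift (invCone F c σ) ⟨x, hx⟩,
    (ConcreteCategory.congr_hom (ht.fac (invCone F c σ) c) _).trans (invCone_π_app_self c σ _)⟩

end Stmt4

open Stmt4 in
/-- Let `𝒞` be a strongly connected small category (all hom-sets are
nonempty), `k` a commutative ring, and `𝓕 : 𝒞 ⥤ Mod(k)`. Then the limit of `𝓕` exists, and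
for every `c` the canonical projection `φ_c : lim 𝓕 → 𝓕(c)` is a monomorphism whose range is
exactly the submodule `inv 𝓕(c)` of invariant elements; thus it induces an isomorphism
`lim 𝓕 ≅ inv 𝓕(c)`. -/
theorem limit_of_stronglyConnected
    (k : Type) [CommRing k] (C : Type) [SmallCategory C]
    (hconn : ∀ c c' : C, Nonempty (c ⟶ c'))
    (F : C ⥤ ModuleCat.{0} k) :
    HasLimit F ∧
    ∀ c : C, Mono (limit.π F c) ∧
      LinearMap.range (limit.π F c).hom = inv F c :=
  ⟨inferInstance, fun c =>
    ⟨(limit.isLimit F).mono_π_app_of_nonempty_hom (hconn c),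
      le_antisymm (range_π_app_le_inv (limit.cone F) c)
        (inv_le_range_π_app (limit.isLimit F) (hconn c))⟩⟩
end

section
/- Let 𝒞 be a small category with pairwise coproducts, k a commutative ring, and 𝓕 : 𝒞 → Mod(k) a representation. Let sq : 𝒞 → 𝒞 be the functor c ↦ c ⊔ c and let i₁, i₂ : Id_𝒞 → sq be the natural transformations given by the two coproduct coprojections c → c ⊔ c. Then for every n ≥ 0 and k ∈ {1,2}, the induced homomorphism (i_k)_* : limⁿ 𝓕 → limⁿ (𝓕 ∘ sq) is an isomorphism. -/
/-!
Both coprojections induce the same map `lim 𝓕 → lim (𝓕 ∘ sq)`: each leg of a limit cone is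
compatible along `inl` and along `inr`. This survives derivation because precomposition with `sq`
is exact: applied to an injective resolution `P` of `𝓕` it gives an exact resolution of `𝓕 ∘ sq`,
which maps to an injective resolution `Q`, so both `(i₁)_*` and `(i₂)_*` are computed by chain maps
`P → sq^* P → Q` that differ only in a first factor on which `lim` agrees degreewise.

The codiagonal `∇ : sq ⟶ 𝟭` then inverts `(i₁)_*`. One composite is `(i₁ ≫ ∇)_* = 𝟙`. For the
other, `∇ ≫ i₁ = sq(i₂) ≫ γ` and `sq(i₁) ≫ γ = 𝟙` for `γ : (c ⊔ c) ⊔ (c ⊔ c) → c ⊔ c` equal to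
`∇ ≫ inl` on the first summand and to the swap on the second, and the first part applied to
`𝓕 ∘ sq` identifies `sq(i₂)_*` with `sq(i₁)_*`.
-/

open CategoryTheory CategoryTheory.Limits

namespace Stmt6

variable (k : Type) [CommRing k] (C : Type) [SmallCategory C]

noncomputable instance limAdditive :
    (lim : (C ⥤ ModuleCat.{0} k) ⥤ ModuleCat.{0} k).Additive :=
  Functor.additive_of_preserves_binary_products _

/-- The `n`-th derived limit over `𝒞` of a representation `𝓕 : 𝒞 ⥤ Mod(k)`. -/
noncomputable def limN [HasInjectiveResolutions (C ⥤ ModuleCat.{0} k)]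
    (n : ℕ) (F : C ⥤ ModuleCat.{0} k) : ModuleCat.{0} k :=
  ((lim : (C ⥤ ModuleCat.{0} k) ⥤ ModuleCat.{0} k).rightDerived n).obj F

variable {C} [HasBinaryCoproducts C]

/-- The functor `sq : 𝒞 ⥤ 𝒞`, `c ↦ c ⊔ c`. -/
@[simps]
noncomputable def sq : C ⥤ C where
  obj c := c ⨿ c
  map f := coprod.map f f

/-- The natural transformation `i₁ : Id ⟶ sq` given by the first coprojection
`c → c ⊔ c`. -/
@[simps]
noncomputable def i₁ : 𝟭 C ⟶ sq where
  app c := coprod.inl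
  naturality _ _ f := (coprod.inl_map f f).symm

/-- The natural transformation `i₂ : Id ⟶ sq` given by the second coprojection
`c → c ⊔ c`. -/
@[simps]
noncomputable def i₂ : 𝟭 C ⟶ sq where
  app c := coprod.inr
  naturality _ _ f := (coprod.inr_map f f).symm

variable {k}

/-- The morphism of representations `𝓕 ⟶ 𝓕 ∘ sq` induced by a natural transformation
`Id ⟶ sq`. -/
noncomputable def indMap (F : C ⥤ ModuleCat.{0} k) (i : 𝟭 C ⟶ sq) : F ⟶ sq ⋙ F :=
  F.leftUnitor.inv ≫ Functor.whiskerRight i F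

end Stmt6

namespace CategoryTheory

@[simps]
def NatTrans.appHomologicalComplex {V : Type*} [Category* V] [HasZeroMorphisms V]
    {W : V ⥤ V} [W.PreservesZeroMorphisms] {ι : Type*} {c : ComplexShape ι} (τ : 𝟭 V ⟶ W)
    (K : HomologicalComplex V c) : K ⟶ (W.mapHomologicalComplex c).obj K where
  f i := τ.app (K.X i)
  comm' _ _ _ := (τ.naturality _).symm

theorem lim_map_whiskerRight_eq {J D : Type*} [Category* J] [Category* D] [HasLimitsOfShape J D]
    {Ψ : J ⥤ J} (α β : 𝟭 J ⟶ Ψ) (F : J ⥤ D) :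
    lim.map (Functor.whiskerRight α F) = lim.map (Functor.whiskerRight β F) := by
  refine limit.hom_ext fun j => ?_
  simp only [lim_map, limMap_π, Functor.whiskerRight_app]
  exact (limit.w (𝟭 J ⋙ F) (α.app j)).trans (limit.w (𝟭 J ⋙ F) (β.app j)).symm

namespace InjectiveResolution

variable {A : Type*} [Category* A] [Abelian A]

section DescOfExact

variable {Y Z : A} (I : InjectiveResolution Z) {K : CochainComplex A ℕ}
  (ι₀ : Y ⟶ K.X 0) [hι₀ : Mono ι₀] (f : Y ⟶ Z) (w : ι₀ ≫ K.d 0 1 = 0)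
  (h₀ : (ShortComplex.mk ι₀ (K.d 0 1) w).Exact)
  (h : ∀ n, (ShortComplex.mk _ _ (K.d_comp_d n (n + 1) (n + 2))).Exact)

noncomputable def descOfExact : K ⟶ I.cocomplex :=
  CochainComplex.mkHom _ _ (Injective.factorThru (f ≫ I.ι.f 0) ι₀)
    (h₀.descToInjective (Injective.factorThru (f ≫ I.ι.f 0) ι₀ ≫ I.cocomplex.d 0 1) (by
        rw [Injective.comp_factorThru_assoc]
        exact (Category.assoc _ _ _).trans ((f ≫= I.ι_f_zero_comp_complex_d).trans comp_zero)))
    (h₀.comp_descToInjective _ _).symm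
    fun n ⟨_, g', w⟩ => ⟨(h n).descToInjective (g' ≫ I.cocomplex.d (n + 1) (n + 2))
      (by simp [← reassoc_of% w]), ((h n).comp_descToInjective _ _).symm⟩

lemma comp_descOfExact_f_zero : ι₀ ≫ (I.descOfExact ι₀ f w h₀ h).f 0 = f ≫ I.ι.f 0 :=
  Injective.comp_factorThru _ _

end DescOfExact

variable {W : A ⥤ A} [W.PreservesZeroMorphisms] [PreservesFiniteLimits W]
  [PreservesFiniteColimits W] {X : A} (P : InjectiveResolution X)
  (Q : InjectiveResolution (W.obj X))

/-- `W` need not preserve injectives, so `W` applied to `P` is only an exact resolution of `W X`;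
this compares it with an injective one. -/
noncomputable def descMap : (W.mapHomologicalComplex _).obj P.cocomplex ⟶ Q.cocomplex :=
  Q.descOfExact (W.map (P.ι.f 0)) (hι₀ := W.map_mono _) (𝟙 _) _ (P.exact₀.map W)
    fun n => (P.exact_succ n).map W

lemma map_ι_f_zero_comp_descMap_f_zero : W.map (P.ι.f 0) ≫ (P.descMap Q).f 0 = Q.ι.f 0 :=
  (Q.comp_descOfExact_f_zero (K := (W.mapHomologicalComplex _).obj P.cocomplex)
    (hι₀ := W.map_mono (P.ι.f 0)) (W.map (P.ι.f 0)) (𝟙 _) _ (P.exact₀.map W) _).trans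
    (Category.id_comp _)

lemma ι_comp_appHomologicalComplex_comp_descMap (τ : 𝟭 A ⟶ W) :
    P.ι ≫ τ.appHomologicalComplex P.cocomplex ≫ P.descMap Q =
      (CochainComplex.single₀ A).map (τ.app X) ≫ Q.ι := by
  apply HomologicalComplex.from_single_hom_ext
  simp only [HomologicalComplex.comp_f, CochainComplex.single₀_map_f_zero,
    NatTrans.appHomologicalComplex_f]
  exact (τ.naturality_assoc (P.ι.f 0) _).trans (τ.app X ≫= P.map_ι_f_zero_comp_descMap_f_zero Q)

end InjectiveResolution

variable {A : Type*} [Category* A] [Abelian A] {D : Type*} [Category* D] [Abelian D]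
  [HasInjectiveResolutions A]

theorem Functor.rightDerived_map_app_eq_of_whiskerRight_eq (L : A ⥤ D) [L.Additive]
    {W : A ⥤ A} [W.PreservesZeroMorphisms] [PreservesFiniteLimits W] [PreservesFiniteColimits W]
    {τ₁ τ₂ : 𝟭 A ⟶ W} (h : Functor.whiskerRight τ₁ L = Functor.whiskerRight τ₂ L) (n : ℕ)
    (X : A) : (L.rightDerived n).map (τ₁.app X) = (L.rightDerived n).map (τ₂.app X) := by
  let P := injectiveResolution X
  let Q := injectiveResolution (W.obj X)
  have hL : (L.mapHomologicalComplex _).map (τ₁.appHomologicalComplex P.cocomplex ≫ P.descMap Q) =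
      (L.mapHomologicalComplex _).map (τ₂.appHomologicalComplex P.cocomplex ≫ P.descMap Q) := by
    ext m
    simp only [Functor.mapHomologicalComplex_map_f, HomologicalComplex.comp_f, Functor.map_comp,
      NatTrans.appHomologicalComplex_f]
    exact NatTrans.congr_app h _ =≫ _
  rw [L.rightDerived_map_eq n _ _ (P.ι_comp_appHomologicalComplex_comp_descMap Q τ₁),
    L.rightDerived_map_eq n _ _ (P.ι_comp_appHomologicalComplex_comp_descMap Q τ₂),
    Functor.comp_map, Functor.comp_map, hL]

theorem rightDerived_lim_map_whiskerRight_eq {J : Type*} [Category* J] [HasLimitsOfShape J D]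
    [(lim : (J ⥤ D) ⥤ D).Additive] [HasInjectiveResolutions (J ⥤ D)] (n : ℕ) {Ψ : J ⥤ J}
    (α β : 𝟭 J ⟶ Ψ) (F : J ⥤ D) :
    ((lim : (J ⥤ D) ⥤ D).rightDerived n).map (Functor.whiskerRight α F) =
      ((lim : (J ⥤ D) ⥤ D).rightDerived n).map (Functor.whiskerRight β F) :=
  lim.rightDerived_map_app_eq_of_whiskerRight_eq
    (τ₁ := ((Functor.whiskeringLeft J J D).map α : 𝟭 (J ⥤ D) ⟶ _))
    (τ₂ := (Functor.whiskeringLeft J J D).map β)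
    (by ext F : 2; exact lim_map_whiskerRight_eq α β F) n F

end CategoryTheory

namespace Stmt6

variable {k : Type} [CommRing k] {C : Type} [SmallCategory C] [HasBinaryCoproducts C]

theorem rightDerived_lim_map_indMap_i₁_eq_i₂ [HasInjectiveResolutions (C ⥤ ModuleCat.{0} k)]
    (n : ℕ) (G : C ⥤ ModuleCat.{0} k) :
    ((lim : (C ⥤ ModuleCat.{0} k) ⥤ ModuleCat.{0} k).rightDerived n).map (indMap G i₁) =
      ((lim : (C ⥤ ModuleCat.{0} k) ⥤ ModuleCat.{0} k).rightDerived n).map (indMap G i₂) := by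
  rw [indMap, indMap, Functor.map_comp, Functor.map_comp,
    rightDerived_lim_map_whiskerRight_eq n i₁ i₂ G]

noncomputable def codiagNatTrans : (sq : C ⥤ C) ⟶ 𝟭 C where
  app c := codiag c
  naturality _ _ f := coprod.map_codiag f

noncomputable def codiagMap (F : C ⥤ ModuleCat.{0} k) : sq ⋙ F ⟶ F :=
  Functor.whiskerRight codiagNatTrans F ≫ F.leftUnitor.hom

noncomputable def sqSqFold : (sq : C ⥤ C) ⋙ sq ⟶ sq where
  app c := coprod.desc (codiag c ≫ coprod.inl) (coprod.desc coprod.inr coprod.inl)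
  naturality c d f := by
    show coprod.map (coprod.map f f) (coprod.map f f) ≫
        coprod.desc (codiag d ≫ coprod.inl) (coprod.desc coprod.inr coprod.inl) =
      coprod.desc (codiag c ≫ coprod.inl) (coprod.desc coprod.inr coprod.inl) ≫ coprod.map f f
    ext <;> simp [coprod.inl_desc]

theorem i₁_comp_codiagNatTrans : i₁ ≫ codiagNatTrans = 𝟙 (𝟭 C) := by
  ext c
  exact coprod.inl_desc _ _

theorem whiskerRight_i₁_comp_sqSqFold :
    Functor.whiskerRight i₁ sq ≫ sqSqFold = (Functor.leftUnitor (sq : C ⥤ C)).hom := by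
  ext c
  show coprod.map coprod.inl coprod.inl ≫
      coprod.desc (codiag c ≫ coprod.inl) (coprod.desc coprod.inr coprod.inl) = 𝟙 (c ⨿ c)
  ext <;> simp [coprod.inl_desc]

theorem whiskerRight_i₂_comp_sqSqFold :
    Functor.whiskerRight i₂ sq ≫ sqSqFold =
      (Functor.leftUnitor (sq : C ⥤ C)).hom ≫ codiagNatTrans ≫ i₁ := by
  ext c
  show coprod.map coprod.inr coprod.inr ≫
      coprod.desc (codiag c ≫ coprod.inl) (coprod.desc coprod.inr coprod.inl) =
    𝟙 (c ⨿ c) ≫ codiag c ≫ coprod.inl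
  ext <;> simp [coprod.inl_desc, coprod.inr_desc]

variable (F : C ⥤ ModuleCat.{0} k)

theorem indMap_i₁_comp_codiagMap : indMap F i₁ ≫ codiagMap F = 𝟙 F := by
  rw [indMap, codiagMap, Category.assoc, ← Category.assoc (Functor.whiskerRight i₁ F),
    ← Functor.whiskerRight_comp, i₁_comp_codiagNatTrans, Functor.whiskerRight_id',
    Category.id_comp, Iso.inv_hom_id]

theorem codiagMap_comp_indMap_i₁ :
    codiagMap F ≫ indMap F i₁ = indMap (sq ⋙ F) i₂ ≫ Functor.whiskerRight sqSqFold F := by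
  rw [indMap, indMap, codiagMap, Category.assoc, Iso.hom_inv_id_assoc,
    ← Functor.whiskerRight_comp, Category.assoc]
  erw [← Functor.whiskerRight_comp (Functor.whiskerRight i₂ sq), whiskerRight_i₂_comp_sqSqFold]
  ext c : 2
  simp

theorem indMap_i₁_comp_whiskerRight_sqSqFold :
    indMap (sq ⋙ F) i₁ ≫ Functor.whiskerRight sqSqFold F = 𝟙 (sq ⋙ F) := by
  rw [indMap, Category.assoc]
  erw [← Functor.whiskerRight_comp (Functor.whiskerRight i₁ sq), whiskerRight_i₁_comp_sqSqFold]
  ext c : 2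
  simp

end Stmt6

open Stmt6 in
/-- Let `𝒞` be a small category with pairwise coproducts and
`𝓕 : 𝒞 ⥤ Mod(k)` a representation. Then for every `n ≥ 0` and `k ∈ {1,2}`, the map
`(i_k)_* : limⁿ 𝓕 → limⁿ (𝓕 ∘ sq)` induced by the coprojections `i_k : c → c ⊔ c` is an
isomorphism. -/
theorem isIso_limN_map_coproj
    (k : Type) [CommRing k] (C : Type) [SmallCategory C] [HasBinaryCoproducts C]
    [HasInjectiveResolutions (C ⥤ ModuleCat.{0} k)]
    (F : C ⥤ ModuleCat.{0} k) (n : ℕ) :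
    IsIso (((lim : (C ⥤ ModuleCat.{0} k) ⥤ ModuleCat.{0} k).rightDerived n).map
        (indMap F i₁)) ∧
    IsIso (((lim : (C ⥤ ModuleCat.{0} k) ⥤ ModuleCat.{0} k).rightDerived n).map
        (indMap F i₂)) := by
  set R := (lim : (C ⥤ ModuleCat.{0} k) ⥤ ModuleCat.{0} k).rightDerived n
  have hiso : IsIso (R.map (indMap F i₁)) :=
    ⟨R.map (codiagMap F), by rw [← R.map_comp, indMap_i₁_comp_codiagMap, R.map_id],
      by rw [← R.map_comp, codiagMap_comp_indMap_i₁, R.map_comp,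
        ← rightDerived_lim_map_indMap_i₁_eq_i₂, ← R.map_comp,
        indMap_i₁_comp_whiskerRight_sqSqFold, R.map_id]⟩
  exact ⟨hiso, rightDerived_lim_map_indMap_i₁_eq_i₂ n F ▸ hiso⟩
end
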